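/- For n = 11, W(n) = n·⌈log₂ n⌉ - 2^⌈log₂ n⌉ + 1 satisfies W(11) = 29 > ⌈11·log₂ 11 - 0.914·11⌉ = 28; hence the upper bound W(n) ≤ ⌈n·log₂ n - 0.914·n⌉ claimed in the literature is false. -/

import Mathlib

/-! The merge-sort side is the integer `11 · 4 - 16 + 1 = 29`, since `2³ < 11 ≤ 2⁴`. On the other
side, `11 · log₂ 11 - 0.914 · 11 ≈ 27.9997` lies just below `28`; the rational brackets
`17/5 < log₂ 11 ≤ 3411/986`, certified by `2¹⁷ < 11⁵` and `11⁹⁸⁶ ≤ 2³⁴¹¹`, pin its ceiling. -/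

namespace Real

variable {b x : ℝ} {p q : ℕ}

lemma logb_le_div_of_pow_le_pow (hb : 1 < b) (hx : 0 < x) (hq : 0 < q) (h : x ^ q ≤ b ^ p) :
    logb b x ≤ p / q := by
  rw [le_div_iff₀ (by positivity), mul_comm]
  calc q * logb b x = logb b (x ^ q) := (logb_pow b x q).symm
    _ ≤ logb b (b ^ p) := logb_le_logb_of_le hb (by positivity) h
    _ = p := by rw [logb_pow, logb_self_eq_one hb, mul_one]

lemma div_lt_logb_of_pow_lt_pow (hb : 1 < b) (hq : 0 < q) (h : b ^ p < x ^ q) :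
    p / q < logb b x := by
  rw [div_lt_iff₀ (by positivity), mul_comm]
  calc (p : ℝ) = logb b (b ^ p) := by rw [logb_pow, logb_self_eq_one hb, mul_one]
    _ < logb b (x ^ q) := logb_lt_logb hb (by positivity) h
    _ = q * logb b x := logb_pow b x q

end Real

lemma clog_two_eleven : Nat.clog 2 11 = 4 :=
  le_antisymm (Nat.clog_le_of_le_pow (by norm_num))
    ((Nat.lt_clog_iff_pow_lt one_lt_two).2 (by norm_num))

theorem counterexample_11 :
    (11 : ℤ) * Nat.clog 2 11 - 2 ^ Nat.clog 2 11 + 1 = 29 ∧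
    ⌈(11 : ℝ) * Real.logb 2 11 - 0.914 * 11⌉ = 28 ∧
    ¬ ((11 : ℤ) * Nat.clog 2 11 - 2 ^ Nat.clog 2 11 + 1
        ≤ ⌈(11 : ℝ) * Real.logb 2 11 - 0.914 * 11⌉) := by
  have hW : (11 : ℤ) * Nat.clog 2 11 - 2 ^ Nat.clog 2 11 + 1 = 29 := by
    rw [clog_two_eleven]; norm_num
  have hlower : ((17 : ℕ) : ℝ) / (5 : ℕ) < Real.logb 2 11 :=
    Real.div_lt_logb_of_pow_lt_pow one_lt_two (by norm_num) (by norm_num)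
  have hupper : Real.logb 2 11 ≤ ((3411 : ℕ) : ℝ) / (986 : ℕ) :=
    -- `norm_num` does not evaluate powers with exponent above 256; the kernel compares the numerals
    Real.logb_le_div_of_pow_le_pow one_lt_two (by norm_num) (by norm_num)
      (mod_cast (by decide +kernel : 11 ^ 986 ≤ 2 ^ 3411))
  have hceil : ⌈(11 : ℝ) * Real.logb 2 11 - 0.914 * 11⌉ = 28 := by
    norm_num at hlower hupper
    rw [Int.ceil_eq_iff]
    constructor <;> norm_num <;> linarith
  exact ⟨hW, hceil, by rw [hW, hceil]; norm_num⟩
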